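/- arXiv:2405.16225 — 3 statements merged into one kernel-verified Lean document; each statement's English description precedes it below -/
import Mathlib

section
/- Let M be a maximal ancestral graph on a finite vertex set O and let T, V_a be distinct vertices such that the edge between T and V_a has an arrowhead at V_a (i.e., T → V_a or T ↔ V_a is in M). Then every parent of V_a, every spouse of V_a, and every parent of a spouse of V_a belongs to MMB⁺(T). -/
/-- A mixed graph on a vertex type `V`: each pair of distinct vertices carries at most
one edge, which is either directed (`dir a b` meaning `a → b`) or bidirected
(`bi a b` meaning `a ↔ b`). -/
structure MixedGraph (V : Type*) where
  /-- directed edge `a → b` -/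
  dir : V → V → Prop
  /-- bidirected edge `a ↔ b` -/
  bi : V → V → Prop
  bi_symm : ∀ a b, bi a b → bi b a
  dir_irrefl : ∀ a, ¬ dir a a
  bi_irrefl : ∀ a, ¬ bi a a
  not_dir_and_bi : ∀ a b, dir a b → ¬ bi a b
  not_dir_both : ∀ a b, dir a b → ¬ dir b a

namespace MixedGraph

variable {V : Type*} (G : MixedGraph V)

/-- `a` and `b` are adjacent: some edge joins them. -/
def Adj (a b : V) : Prop := G.dir a b ∨ G.dir b a ∨ G.bi a b

/-- There is an edge between `a` and `b` with an arrowhead at `b`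
(i.e. `a → b` or `a ↔ b`). -/
def HeadAt (a b : V) : Prop := G.dir a b ∨ G.bi a b

/-- `a` is an ancestor of `b` (equivalently `b` is a descendant of `a`):
`a = b` or there is a directed path from `a` to `b`. -/
def Anc : V → V → Prop := Relation.ReflTransGen G.dir

/-- A non-endpoint vertex `b` lying between `a` and `c` on a path is a collider if
both incident edges have an arrowhead at `b`. -/
def ColliderAt (a b c : V) : Prop := G.HeadAt a b ∧ G.HeadAt c b

/-- `p` is a path (a list of pairwise distinct, consecutively adjacent vertices)
from `x` to `y`. -/
def IsPath (p : List V) (x y : V) : Prop :=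
  p.Nodup ∧ p.head? = some x ∧ p.getLast? = some y ∧ p.Chain' G.Adj

/-- The path `p` from `x` to `y` is m-connecting relative to `Z`: every
non-collider on `p` is not in `Z` and every collider on `p` has a descendant in `Z`. -/
def MConnecting (Z : Set V) (p : List V) (x y : V) : Prop :=
  G.IsPath p x y ∧
    ∀ a b c : V, [a, b, c] <:+: p →
      (G.ColliderAt a b c → ∃ z ∈ Z, G.Anc b z) ∧
      (¬ G.ColliderAt a b c → b ∉ Z)

/-- `Z` m-separates `x` and `y` (with `x, y ∉ Z`): no path between `x` and `y` is
m-connecting relative to `Z`. -/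
def MSep (x y : V) (Z : Set V) : Prop :=
  x ∉ Z ∧ y ∉ Z ∧ ∀ p : List V, ¬ G.MConnecting Z p x y

/-- An inducing path between `x` and `y`: every non-endpoint vertex is a collider on
the path and is an ancestor of `x` or of `y`. -/
def IsInducingPath (p : List V) (x y : V) : Prop :=
  G.IsPath p x y ∧
    ∀ a b c : V, [a, b, c] <:+: p → G.ColliderAt a b c ∧ (G.Anc b x ∨ G.Anc b y)

/-- A collider path between `x` and `y`: a path with at least one non-endpoint
vertex, all of whose non-endpoint vertices are colliders. -/
def IsColliderPath (p : List V) (x y : V) : Prop :=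
  G.IsPath p x y ∧ 3 ≤ p.length ∧ ∀ a b c : V, [a, b, c] <:+: p → G.ColliderAt a b c

/-- `G` is ancestral: no directed cycle and no almost directed cycle. -/
def Ancestral : Prop :=
  (∀ a b, G.dir a b → ¬ G.Anc b a) ∧ (∀ a b, G.bi a b → ¬ G.Anc a b)

/-- `G` is a maximal ancestral graph: ancestral, and any two non-adjacent vertices
have no inducing path between them. -/
def IsMAG : Prop :=
  G.Ancestral ∧ ∀ x y : V, x ≠ y → ¬ G.Adj x y → ∀ p : List V, ¬ G.IsInducingPath p x y

/-- The MAG Markov blanket of `T`: all `X ≠ T` such that `T` and `X` are not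
m-separated by `O \ {T, X}`. -/
def MMB (T : V) : Set V :=
  {X | X ≠ T ∧ ¬ G.MSep T X (Set.univ \ {T, X})}

/-- `MMB⁺(T) = MMB(T) ∪ {T}`. -/
def MMBplus (T : V) : Set V := G.MMB T ∪ {T}

/-- The induced subgraph of `G` on a set `s` of vertices, keeping all edges of `G`
between vertices of `s`. -/
def induce (s : Set V) : MixedGraph s where
  dir a b := G.dir a b
  bi a b := G.bi a b
  bi_symm a b h := G.bi_symm a b h
  dir_irrefl a := G.dir_irrefl a
  bi_irrefl a := G.bi_irrefl a
  not_dir_and_bi a b h := G.not_dir_and_bi a b h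
  not_dir_both a b h := G.not_dir_both a b h

end MixedGraph

lemma infix33 {α : Type*} {a b c x y z : α} (h : [a,b,c] <:+: [x,y,z]) :
    a = x ∧ b = y ∧ c = z := by
  obtain ⟨s, t, h⟩ := h
  have hl := congrArg List.length h
  simp at hl
  have hs : s = [] := List.eq_nil_of_length_eq_zero (by omega)
  have ht : t = [] := List.eq_nil_of_length_eq_zero (by omega)
  subst hs ht
  simpa using h

lemma infix34 {α : Type*} {a b c x y z w : α} (h : [a,b,c] <:+: [x,y,z,w]) :
    (a = x ∧ b = y ∧ c = z) ∨ (a = y ∧ b = z ∧ c = w) := by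
  obtain ⟨s, t, h⟩ := h
  have hl := congrArg List.length h
  simp at hl
  have : s.length = 0 ∨ s.length = 1 := by omega
  rcases this with hs | hs
  · have hs' : s = [] := List.eq_nil_of_length_eq_zero hs
    obtain ⟨t0, ht⟩ := List.length_eq_one_iff.mp (by omega : t.length = 1)
    subst hs' ht
    simp at h
    exact Or.inl ⟨h.1, h.2.1, h.2.2.1⟩
  · obtain ⟨s0, hs'⟩ := List.length_eq_one_iff.mp hs
    have ht : t = [] := List.eq_nil_of_length_eq_zero (by omega)
    subst hs' ht
    simp at h
    exact Or.inr ⟨h.2.1, h.2.2.1, h.2.2.2⟩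

/-- if the edge between `T` and `V_a` has an arrowhead at `V_a`, then
each parent of `V_a`, each spouse of `V_a`, and each parent of a spouse of `V_a`
belongs to `MMB⁺(T)`. -/
theorem pa_sp_paSp_mem_mmbplus {V : Type*} [Fintype V]
    (G : MixedGraph V) (hG : G.IsMAG) (T va : V) (hTa : T ≠ va)
    (hhead : G.HeadAt T va) :
    ∀ w : V, (G.dir w va ∨ G.bi w va ∨ ∃ s : V, G.bi s va ∧ G.dir w s) →
      w ∈ G.MMBplus T := by
  intro w hw
  by_cases hwT : w = T
  · exact Or.inr hwT
  · refine Or.inl ⟨hwT, ?_⟩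
    rintro ⟨-, -, hpath⟩
    have hmemZ : ∀ x : V, x ≠ T → x ≠ w → x ∈ (Set.univ \ {T, w} : Set V) := by
      intro x h1 h2; simp [h1, h2]
    have hadjTva : G.Adj T va := hhead.elim Or.inl (fun h => Or.inr (Or.inr h))
    rcases hw with hw | hw | ⟨s, hsva, hws⟩
    · -- w is a parent of va
      have hvaw : va ≠ w := by rintro rfl; exact G.dir_irrefl _ hw
      apply hpath [T, va, w]
      refine ⟨⟨?_, rfl, by simp, ?_⟩, ?_⟩
      · simp [hTa, Ne.symm hwT, hvaw]
      · simp only [List.Chain', List.isChain_cons_cons, List.isChain_singleton, and_true]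
        exact ⟨hadjTva, Or.inr (Or.inl hw)⟩
      · intro a b c hinf
        obtain ⟨rfl, rfl, rfl⟩ := infix33 hinf
        have hcol : G.ColliderAt a b c := ⟨hhead, Or.inl hw⟩
        exact ⟨fun _ => ⟨b, hmemZ b (Ne.symm hTa) hvaw, Relation.ReflTransGen.refl⟩,
          fun hn => absurd hcol hn⟩
    · -- w is a spouse of va
      have hvaw : va ≠ w := by rintro rfl; exact G.bi_irrefl _ hw
      apply hpath [T, va, w]
      refine ⟨⟨?_, rfl, by simp, ?_⟩, ?_⟩
      · simp [hTa, Ne.symm hwT, hvaw]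
      · simp only [List.Chain', List.isChain_cons_cons, List.isChain_singleton, and_true]
        exact ⟨hadjTva, Or.inr (Or.inr (G.bi_symm _ _ hw))⟩
      · intro a b c hinf
        obtain ⟨rfl, rfl, rfl⟩ := infix33 hinf
        have hcol : G.ColliderAt a b c := ⟨hhead, Or.inr hw⟩
        exact ⟨fun _ => ⟨b, hmemZ b (Ne.symm hTa) hvaw, Relation.ReflTransGen.refl⟩,
          fun hn => absurd hcol hn⟩
    · -- w is a parent of a spouse s of va
      by_cases hsT : s = T
      · -- then w → T directly
        have hws' : G.dir w T := hsT ▸ hws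
        apply hpath [T, w]
        refine ⟨⟨by simp [Ne.symm hwT], rfl, by simp, ?_⟩, ?_⟩
        · simp only [List.Chain', List.isChain_cons_cons, List.isChain_singleton, and_true]
          exact Or.inr (Or.inl hws')
        · intro a b c hinf
          exact absurd hinf.length_le (by simp)
      · have hvas : va ≠ s := by rintro rfl; exact G.bi_irrefl _ hsva
        have hvaw : va ≠ w := by
          rintro rfl; exact G.not_dir_and_bi _ _ hws (G.bi_symm _ _ hsva)
        have hsw : s ≠ w := by rintro rfl; exact G.dir_irrefl _ hws
        apply hpath [T, va, s, w]
        refine ⟨⟨?_, rfl, by simp, ?_⟩, ?_⟩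
        · simp [hTa, Ne.symm hsT, Ne.symm hwT, hvas, hvaw, hsw]
        · simp only [List.Chain', List.isChain_cons_cons, List.isChain_singleton, and_true]
          exact ⟨hadjTva, Or.inr (Or.inr (G.bi_symm _ _ hsva)), Or.inr (Or.inl hws)⟩
        · intro a b c hinf
          rcases infix34 hinf with ⟨rfl, rfl, rfl⟩ | ⟨rfl, rfl, rfl⟩
          · have hcol : G.ColliderAt a b c := ⟨hhead, Or.inr hsva⟩
            exact ⟨fun _ => ⟨b, hmemZ b (Ne.symm hTa) hvaw, Relation.ReflTransGen.refl⟩,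
              fun hn => absurd hcol hn⟩
          · have hcol : G.ColliderAt a b c := ⟨Or.inr (G.bi_symm _ _ hsva), Or.inl hws⟩
            exact ⟨fun _ => ⟨b, hmemZ b hsT hsw, Relation.ReflTransGen.refl⟩,
              fun hn => absurd hcol hn⟩
end

section
/- Let M be a maximal ancestral graph on a finite vertex set O and let X, Y ∈ O be distinct. Then X and Y are adjacent in M if and only if there is no set Z ⊆ O \ {X, Y} that m-separates X and Y. -/
namespace MixedGraph

variable {V : Type*} {G : MixedGraph V}

lemma Adj.symm {a b : V} (h : G.Adj a b) : G.Adj b a := by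
  rcases h with h | h | h
  · exact Or.inr (Or.inl h)
  · exact Or.inl h
  · exact Or.inr (Or.inr (G.bi_symm _ _ h))

lemma ColliderAt.symm {a b c : V} (h : G.ColliderAt a b c) : G.ColliderAt c b a :=
  ⟨h.2, h.1⟩

/-- Directed-edge chase along a path: if `u → v` sits on a suffix of a path whose
last vertex is `x` or `y`, and every collider on the path is an ancestor of `x` or
`y`, then `u` is an ancestor of `x` or `y`. -/
lemma chase {x y : V} (p : List V)
    (hchain : p.Chain' G.Adj)
    (hlast : p.getLast? = some x ∨ p.getLast? = some y)
    (htrip : ∀ a b c : V, [a, b, c] <:+: p → G.ColliderAt a b c →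
      G.Anc b x ∨ G.Anc b y) :
    ∀ (s' : List V) (u v : V), u :: v :: s' <:+ p → G.dir u v →
      G.Anc u x ∨ G.Anc u y := by
  intro s'
  induction s' with
  | nil =>
    intro u v hsuf hdir
    obtain ⟨pre, rfl⟩ := hsuf
    have hl : (pre ++ [u, v]).getLast? = some v := by
      rw [List.getLast?_append_of_ne_nil _ (by simp)]; rfl
    have huv : G.Anc u v := Relation.ReflTransGen.single hdir
    rcases hlast with h | h
    · rw [hl] at h
      injection h with h
      exact Or.inl (h ▸ huv)
    · rw [hl] at h
      injection h with h
      exact Or.inr (h ▸ huv)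
  | cons w s'' IH =>
    intro u v hsuf hdir
    have hinf : [u, v, w] <:+: p := by
      obtain ⟨pre, rfl⟩ := hsuf
      exact ⟨pre, s'', by simp⟩
    by_cases hcol : G.ColliderAt u v w
    · rcases htrip u v w hinf hcol with h | h
      · exact Or.inl ((Relation.ReflTransGen.single hdir).trans h)
      · exact Or.inr ((Relation.ReflTransGen.single hdir).trans h)
    · have hhead : G.HeadAt u v := Or.inl hdir
      have hnh : ¬ G.HeadAt w v := fun h => hcol ⟨hhead, h⟩
      have hadjvw : G.Adj v w := by
        have := hchain.infix hinf
        exact (List.isChain_cons_cons.1 (List.isChain_cons_cons.1 this).2).1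
      have hdirvw : G.dir v w := by
        rcases hadjvw with h | h | h
        · exact h
        · exact absurd (Or.inl h) hnh
        · exact absurd (Or.inr (G.bi_symm _ _ h)) hnh
      have htsuf : v :: w :: s'' <:+ p := (List.suffix_cons u _).trans hsuf
      rcases IH v w htsuf hdirvw with h | h
      · exact Or.inl ((Relation.ReflTransGen.single hdir).trans h)
      · exact Or.inr ((Relation.ReflTransGen.single hdir).trans h)

lemma head_ne_mid {α : Type*} {pre suf : List α} {a b c x : α}
    (hnodup : (pre ++ [a, b, c] ++ suf).Nodup)
    (hhead : (pre ++ [a, b, c] ++ suf).head? = some x) : b ≠ x := by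
  cases pre with
  | nil =>
    simp only [List.nil_append, List.cons_append, List.head?_cons,
      Option.some.injEq] at hhead
    subst hhead
    intro h
    subst h
    simp at hnodup
  | cons q qs =>
    simp only [List.cons_append, List.head?_cons, Option.some.injEq] at hhead
    subst hhead
    intro h
    subst h
    simp at hnodup

end MixedGraph

/-- in a MAG, two distinct vertices are adjacent iff no set of other
vertices m-separates them. -/
theorem adj_iff_not_exists_msep {V : Type*} [Fintype V]
    (G : MixedGraph V) (hG : G.IsMAG) (x y : V) (hxy : x ≠ y) :
    G.Adj x y ↔ ¬ ∃ Z : Set V, Z ⊆ Set.univ \ {x, y} ∧ G.MSep x y Z := by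
  constructor
  · rintro hadj ⟨Z, _, hxZ, hyZ, hsep⟩
    apply hsep [x, y]
    refine ⟨⟨by simp [hxy], rfl, rfl, List.isChain_pair.2 hadj⟩, ?_⟩
    intro a b c habc
    have := habc.length_le
    simp at this
  · intro hne
    by_contra hadj
    apply hne
    refine ⟨{v | (v ≠ x ∧ v ≠ y) ∧ (G.Anc v x ∨ G.Anc v y)}, ?_, ?_, ?_, ?_⟩
    · intro v hv
      exact ⟨trivial, by rintro (rfl | rfl) <;> simp_all⟩
    · simp
    · simp
    · intro p hp
      obtain ⟨⟨hnodup, hhead, hlast, hchain⟩, htrip⟩ := hp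
      have hcol_anc : ∀ a b c : V, [a, b, c] <:+: p → G.ColliderAt a b c →
          G.Anc b x ∨ G.Anc b y := by
        intro a b c habc hcol
        obtain ⟨z, hz, hbz⟩ := (htrip a b c habc).1 hcol
        rcases hz.2 with h | h
        · exact Or.inl (hbz.trans h)
        · exact Or.inr (hbz.trans h)
      have hmid_ne : ∀ a b c : V, [a, b, c] <:+: p → b ≠ x ∧ b ≠ y := by
        intro a b c habc
        obtain ⟨pre, suf, hps⟩ := habc
        subst hps
        refine ⟨MixedGraph.head_ne_mid hnodup hhead, ?_⟩
        have hrev : (pre ++ [a, b, c] ++ suf).reverse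
            = suf.reverse ++ [c, b, a] ++ pre.reverse := by simp
        have hnodup' := List.nodup_reverse.2 hnodup
        rw [hrev] at hnodup'
        have hhead' : (suf.reverse ++ [c, b, a] ++ pre.reverse).head? = some y := by
          rw [← hrev, List.head?_reverse]; exact hlast
        exact MixedGraph.head_ne_mid hnodup' hhead'
      have hind : G.IsInducingPath p x y := by
        refine ⟨⟨hnodup, hhead, hlast, hchain⟩, ?_⟩
        intro a b c habc
        have hbne := hmid_ne a b c habc
        have hcol : G.ColliderAt a b c := by
          by_contra hnc
          have hbnZ := (htrip a b c habc).2 hnc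
          have hanc : G.Anc b x ∨ G.Anc b y := by
            have hadjab : G.Adj a b := by
              have := hchain.infix habc
              exact (List.isChain_cons_cons.1 this).1
            rcases Classical.em (G.HeadAt c b) with hcb | hcb
            · have hab : ¬ G.HeadAt a b := fun h => hnc ⟨h, hcb⟩
              have hdirba : G.dir b a := by
                rcases hadjab with h | h | h
                · exact absurd (Or.inl h) hab
                · exact h
                · exact absurd (Or.inr h) hab
              obtain ⟨pre, suf, hps⟩ := habc
              refine MixedGraph.chase p.reverse ?_ ?_ ?_ pre.reverse b a ?_ hdirba
              · refine List.isChain_reverse.2 ?_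
                exact hchain.imp (fun _ _ h => h.symm)
              · left; rw [List.getLast?_reverse]; exact hhead
              · intro a' b' c' h hc'
                have h2 : [c', b', a'] <:+: p := by
                  have h3 := (List.reverse_infix (l₁ := [a', b', c'])
                    (l₂ := p.reverse)).2 h
                  simpa using h3
                exact hcol_anc _ _ _ h2 hc'.symm
              · subst hps
                refine ⟨suf.reverse ++ [c], by simp⟩
            · have hdirbc : G.dir b c := by
                have hadjbc : G.Adj b c := by
                  have := hchain.infix habc
                  exact (List.isChain_cons_cons.1 (List.isChain_cons_cons.1 this).2).1
                rcases hadjbc with h | h | h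
                · exact h
                · exact absurd (Or.inl h) hcb
                · exact absurd (Or.inr (G.bi_symm _ _ h)) hcb
              obtain ⟨pre, suf, hps⟩ := habc
              refine MixedGraph.chase p hchain (Or.inr hlast) hcol_anc suf b c ?_ hdirbc
              subst hps
              exact ⟨pre ++ [a], by simp⟩
          exact hbnZ ⟨hbne, hanc⟩
        exact ⟨hcol, hcol_anc a b c habc hcol⟩
      exact hG.2 x y hxy hadj p hind
end

section
/- Let M be a maximal ancestral graph on a finite vertex set O, let T ∈ O, and let X ∈ MMB(T). Then T and X are adjacent in M if and only if no subset of MMB(T) \ {X} m-separates T and X. -/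
section ListHelpers

variable {α : Type*}

lemma triple_infix_iff (p : List α) (a b c : α) :
    [a, b, c] <:+: p ↔ ∃ i, p[i]? = some a ∧ p[i + 1]? = some b ∧ p[i + 2]? = some c := by
  constructor
  · rintro ⟨l, r, rfl⟩
    induction l with
    | nil => exact ⟨0, by simp, by simp, by simp⟩
    | cons x l ih =>
      obtain ⟨i, h1, h2, h3⟩ := ih
      exact ⟨i + 1, by simpa using h1, by simpa using h2, by simpa using h3⟩
  · rintro ⟨i, h1, h2, h3⟩
    induction p generalizing i with
    | nil => simp at h1
    | cons x p ih =>
      cases i with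
      | zero =>
        simp at h1
        cases p with
        | nil => simp at h2
        | cons y q =>
          simp at h2
          cases q with
          | nil => simp at h3
          | cons z t =>
            simp at h3
            subst h1; subst h2; subst h3
            exact ⟨[], t, by simp⟩
      | succ i =>
        simp only [List.getElem?_cons_succ] at h1 h2 h3
        exact (ih i h1 h2 h3).trans (List.suffix_cons x p).isInfix

lemma getElem?_inj_of_nodup {p : List α} (h : p.Nodup) {i j : ℕ} {x : α}
    (hi : p[i]? = some x) (hj : p[j]? = some x) : i = j := by
  obtain ⟨hi', rfl⟩ := List.getElem?_eq_some_iff.1 hi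
  obtain ⟨hj', he⟩ := List.getElem?_eq_some_iff.1 hj
  exact h.getElem_inj_iff.1 he.symm

lemma chain'_getElem? {R : α → α → Prop} {p : List α} (h : List.Chain' R p) {i : ℕ} {a b : α}
    (ha : p[i]? = some a) (hb : p[i + 1]? = some b) : R a b := by
  obtain ⟨hi, rfl⟩ := List.getElem?_eq_some_iff.1 ha
  obtain ⟨hj, rfl⟩ := List.getElem?_eq_some_iff.1 hb
  have := List.isChain_iff_getElem.1 h i (by omega)
  simpa using this

end ListHelpers

namespace MixedGraph

variable {V : Type*} {G : MixedGraph V}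

lemma dir_of_adj {a b : V} (h : G.Adj a b) (hn : ¬ G.HeadAt b a) : G.dir a b := by
  rcases h with h | h | h
  · exact h
  · exact absurd (Or.inl h) hn
  · exact absurd (Or.inr (G.bi_symm _ _ h)) hn

/-- The D-SEP set of Richardson–Spirtes. -/
def DSep (G : MixedGraph V) (T X : V) : Set V :=
  {W | W ≠ T ∧ W ≠ X ∧ (G.Anc W T ∨ G.Anc W X) ∧
    ∃ p, G.IsPath p T W ∧
      ∀ a b c, [a, b, c] <:+: p → G.ColliderAt a b c ∧ (G.Anc b T ∨ G.Anc b X)}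

lemma dSep_subset (G : MixedGraph V) (T X : V) : DSep G T X ⊆ G.MMB T \ {X} := by
  rintro w ⟨hwT, hwX, -, p, hp, htrip⟩
  refine ⟨⟨hwT, ?_⟩, hwX⟩
  rintro ⟨-, -, hall⟩
  refine hall p ⟨hp, ?_⟩
  intro a b c hinf
  obtain ⟨i, h1, h2, h3⟩ := (triple_infix_iff p a b c).1 hinf
  have h0 : p[0]? = some T := by rw [← List.head?_eq_getElem?]; exact hp.2.1
  have hl : p[p.length - 1]? = some w := by rw [← List.getLast?_eq_getElem?]; exact hp.2.2.1
  have hi2 : i + 2 < p.length := (List.getElem?_eq_some_iff.1 h3).1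
  have hbT : b ≠ T := by
    intro h; subst h
    have := getElem?_inj_of_nodup hp.1 h2 h0
    omega
  have hbw : b ≠ w := by
    intro h; subst h
    have := getElem?_inj_of_nodup hp.1 h2 hl
    omega
  refine ⟨fun _ => ⟨b, ?_, Relation.ReflTransGen.refl⟩, fun hn => absurd (htrip a b c hinf).1 hn⟩
  simp [hbT, hbw]

lemma dSep_msep (hG : G.IsMAG) {T X : V} (hTX : T ≠ X) (hnadj : ¬ G.Adj T X) :
    G.MSep T X (DSep G T X) := by
  refine ⟨fun h => h.1 rfl, fun h => h.2.1 rfl, ?_⟩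
  rintro p ⟨hp, hmc⟩
  obtain ⟨hnd, hhead, hlast, hch⟩ := hp
  have h0 : p[0]? = some T := by rw [← List.head?_eq_getElem?]; exact hhead
  have hlst : p[p.length - 1]? = some X := by rw [← List.getLast?_eq_getElem?]; exact hlast
  have hadj : ∀ i {a b : V}, p[i]? = some a → p[i + 1]? = some b → G.Adj a b :=
    fun i a b ha hb => chain'_getElem? hch ha hb
  have htrip : ∀ i {a b c : V}, p[i]? = some a → p[i + 1]? = some b → p[i + 2]? = some c →
      (G.ColliderAt a b c → ∃ z ∈ DSep G T X, G.Anc b z) ∧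
      (¬ G.ColliderAt a b c → b ∉ DSep G T X) :=
    fun i a b c ha hb hc => hmc a b c ((triple_infix_iff p a b c).2 ⟨i, ha, hb, hc⟩)
  -- Step 1 : every collider on p is an ancestor of T or X
  have hcolAnc : ∀ i {a b c : V}, p[i]? = some a → p[i + 1]? = some b → p[i + 2]? = some c →
      G.ColliderAt a b c → G.Anc b T ∨ G.Anc b X := by
    intro i a b c ha hb hc hcol
    obtain ⟨z, hz, hbz⟩ := (htrip i ha hb hc).1 hcol
    exact hz.2.2.1.imp hbz.trans hbz.trans
  -- Step 2 : directed edges on p propagate ancestry of {T, X} backwards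
  have hfwd : ∀ k i {a b : V}, p.length ≤ i + k → p[i]? = some a → p[i + 1]? = some b →
      G.dir a b → G.Anc b T ∨ G.Anc b X := by
    intro k
    induction k with
    | zero =>
      intro i a b hk ha _ _
      have := (List.getElem?_eq_some_iff.1 ha).1
      omega
    | succ k ih =>
      intro i a b hk ha hb hd
      cases hc : p[i + 2]? with
      | none =>
        have hi1 : i + 1 < p.length := (List.getElem?_eq_some_iff.1 hb).1
        have hge : p.length ≤ i + 2 := by
          by_contra hlt
          rw [List.getElem?_eq_none_iff] at hc
          omega
        have : i + 1 = p.length - 1 := by omega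
        rw [this, hlst] at hb
        exact Or.inr (by rw [← Option.some_inj.1 hb]; exact Relation.ReflTransGen.refl)
      | some c =>
        by_cases hcol : G.ColliderAt a b c
        · exact hcolAnc i ha hb hc hcol
        · have hbc : G.dir b c := dir_of_adj (hadj (i + 1) hb hc) fun hh => hcol ⟨Or.inl hd, hh⟩
          exact (ih (i + 1) (by omega) hb hc hbc).imp
            (Relation.ReflTransGen.head hbc) (Relation.ReflTransGen.head hbc)
  have hdirAnc : ∀ i {a b : V}, p[i]? = some a → p[i + 1]? = some b →
      G.dir a b → G.Anc b T ∨ G.Anc b X :=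
    fun i a b => hfwd p.length i (by omega)
  -- Step 3 : every interior vertex of p is a collider
  have hcolls : ∀ i {a b c : V}, p[i]? = some a → p[i + 1]? = some b → p[i + 2]? = some c →
      G.ColliderAt a b c := by
    intro i
    induction i using Nat.strong_induction_on with
    | _ i ih =>
      intro a b c ha hb hc
      by_contra hnc
      apply (htrip i ha hb hc).2 hnc
      have hi2 : i + 2 < p.length := (List.getElem?_eq_some_iff.1 hc).1
      have hbT : b ≠ T := by
        intro h; subst h
        have := getElem?_inj_of_nodup hnd hb h0
        omega
      have hbX : b ≠ X := by
        intro h; subst h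
        have := getElem?_inj_of_nodup hnd hb hlst
        omega
      have hanc : G.Anc b T ∨ G.Anc b X := by
        have hright : G.HeadAt a b → G.Anc b T ∨ G.Anc b X := by
          intro hh
          have hbc : G.dir b c := dir_of_adj (hadj (i + 1) hb hc) fun hh' => hnc ⟨hh, hh'⟩
          exact (hdirAnc (i + 1) hb hc hbc).imp
            (Relation.ReflTransGen.head hbc) (Relation.ReflTransGen.head hbc)
        rcases hadj i ha hb with he | he | he
        · exact hright (Or.inl he)
        · -- b → a
          have hba : G.Anc b a := Relation.ReflTransGen.single he
          rcases Nat.eq_zero_or_pos i with hI | hI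
          · subst hI
            rw [h0] at ha
            exact Or.inl (Option.some_inj.1 ha ▸ hba)
          · obtain ⟨i', rfl⟩ : ∃ i', i = i' + 1 := ⟨i - 1, by omega⟩
            obtain ⟨a', ha'⟩ : ∃ a', p[i']? = some a' :=
              ⟨p[i']'(by omega), List.getElem?_eq_some_iff.2 ⟨by omega, rfl⟩⟩
            have hcola := ih i' (by omega) ha' ha hb
            exact (hcolAnc i' ha' ha hb hcola).imp hba.trans hba.trans
        · exact hright (Or.inr he)
      refine ⟨hbT, hbX, hanc, p.take (i + 2), ⟨?_, ?_, ?_, hch.take _⟩, ?_⟩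
      · exact (p.take_sublist _).nodup hnd
      · rw [List.head?_eq_getElem?, List.getElem?_take]
        simpa using h0
      · rw [List.getLast?_eq_getElem?, List.length_take]
        have hmin : min (i + 2) p.length - 1 = i + 1 := by omega
        rw [hmin, List.getElem?_take]
        simpa using hb
      · intro x y z hinf
        obtain ⟨j, hx, hy, hz⟩ := (triple_infix_iff _ x y z).1 hinf
        have hjlen : j + 2 < (p.take (i + 2)).length := (List.getElem?_eq_some_iff.1 hz).1
        rw [List.length_take] at hjlen
        have hji : j + 2 < i + 2 := by omega
        rw [List.getElem?_take, if_pos (by omega)] at hx hy hz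
        have hcolj := ih j (by omega) hx hy hz
        exact ⟨hcolj, hcolAnc j hx hy hz hcolj⟩
  -- conclude : p is an inducing path, contradicting maximality
  refine hG.2 T X hTX hnadj p ⟨⟨hnd, hhead, hlast, hch⟩, ?_⟩
  intro a b c hinf
  obtain ⟨i, ha, hb, hc⟩ := (triple_infix_iff p a b c).1 hinf
  exact ⟨hcolls i ha hb hc, hcolAnc i ha hb hc (hcolls i ha hb hc)⟩

end MixedGraph

/-- for `X ∈ MMB(T)`, `T` and `X` are adjacent iff no subset of
`MMB(T) \ {X}` m-separates them. -/
theorem adj_iff_not_msep_within_mmb {V : Type*} [Fintype V]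
    (G : MixedGraph V) (hG : G.IsMAG) (T X : V) (hX : X ∈ G.MMB T) :
    G.Adj T X ↔ ¬ ∃ S : Set V, S ⊆ G.MMB T \ {X} ∧ G.MSep T X S := by
  obtain ⟨hXT, -⟩ := hX
  constructor
  · rintro hadj ⟨S, hSsub, hTn, hXn, hall⟩
    refine hall [T, X] ⟨⟨by simp [Ne.symm hXT], rfl, rfl, List.isChain_pair.2 hadj⟩, ?_⟩
    intro a b c hinf
    have := hinf.length_le
    simp at this
  · intro hns
    by_contra hnadj
    exact hns ⟨MixedGraph.DSep G T X, MixedGraph.dSep_subset G T X,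
      MixedGraph.dSep_msep hG (Ne.symm hXT) hnadj⟩
end
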